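/- For every positive integer n, the number of even-zeroed paths of length 4n equals 16 times the number of even-zeroed paths of length 4(n−1) minus 8 times the number of even-zeroed paths of length 4(n−1) + 1 whose total sum of steps equals 1. -/

import Mathlib

/-- A path of length `l` is a sequence of `l` steps, each `+1` (up, `true`) or `-1`
(down, `false`). `psum p k` is the partial sum of the first `k` steps of `p`
(the height of the path after `k` steps). -/
def psum {l : ℕ} (p : Fin l → Bool) (k : ℕ) : ℤ :=
  ∑ i ∈ Finset.univ.filter (fun i : Fin l => (i : ℕ) < k), (if p i then (1 : ℤ) else -1)

/-- A path is even-zeroed if every index at which its partial sum is `0`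
(i.e., every `x`-intercept) is divisible by `4`. -/
def IsEvenZeroed {l : ℕ} (p : Fin l → Bool) : Prop :=
  ∀ k ≤ l, psum p k = 0 → 4 ∣ k

/-- A path of length `2m` is balanced if its total sum of steps is `0`
(equivalently, it has `m` up-steps and `m` down-steps). -/
def IsBalanced {l : ℕ} (p : Fin l → Bool) : Prop :=
  psum p l = 0

/-!
Let `p` be a path of length `4m + 4`. By parity it has no zeros at odd indices, and a zero at
`4m + 4` is allowed, so `p` is even-zeroed iff its first `4m` steps form an even-zeroed path
and it is not at height `0` after `4m + 2` steps. With the last four steps free, the first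
condition alone gives `16` times the count for length `4m`. The paths to remove consist of an
even-zeroed path of length `4m + 1` ending at height `±1`, a forced step back to `0`, and two free
steps; flipping all steps identifies height `-1` with height `1`, whence the factor `2 · 4 = 8`.
-/

variable {l : ℕ}

lemma psum_zero (p : Fin l → Bool) : psum p 0 = 0 := by
  simp [psum]

lemma psum_succ (p : Fin l → Bool) {k : ℕ} (hk : k < l) :
    psum p (k + 1) = psum p k + if p ⟨k, hk⟩ then 1 else -1 := by
  have h : (Finset.univ.filter fun i : Fin l => (i : ℕ) < k + 1) =
      insert ⟨k, hk⟩ (Finset.univ.filter fun i : Fin l => (i : ℕ) < k) := by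
    ext i
    simp only [Finset.mem_filter, Finset.mem_univ, true_and, Finset.mem_insert, Fin.ext_iff]
    omega
  rw [psum, h, Finset.sum_insert (by simp), add_comm]
  rfl

lemma two_dvd_psum_sub (p : Fin l → Bool) {k : ℕ} (hk : k ≤ l) :
    (2 : ℤ) ∣ psum p k - k := by
  induction k with
  | zero => simp [psum_zero]
  | succ k ih =>
    have := ih (by omega)
    rw [psum_succ p hk]
    split <;> push_cast <;> omega

lemma psum_ne_zero_of_odd (p : Fin l → Bool) {k : ℕ} (hk : k ≤ l) (hodd : Odd k) :
    psum p k ≠ 0 := by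
  have := two_dvd_psum_sub p hk
  obtain ⟨j, rfl⟩ := hodd
  push_cast at this
  omega

lemma psum_take (p : Fin l → Bool) {a : ℕ} (h : a ≤ l) {k : ℕ} (hk : k ≤ a) :
    psum (Fin.take a h p) k = psum p k := by
  induction k with
  | zero => rw [psum_zero, psum_zero]
  | succ k ih =>
    rw [psum_succ _ hk, psum_succ p (by omega), ih (by omega)]
    rfl

lemma psum_not (p : Fin l → Bool) (k : ℕ) : psum (fun i => !p i) k = -psum p k := by
  rw [psum, psum, ← Finset.sum_neg_distrib]
  refine Finset.sum_congr rfl fun i _ => ?_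
  cases p i <;> rfl

def IsEvenZeroedUpTo (n : ℕ) (p : Fin l → Bool) : Prop :=
  ∀ k ≤ n, psum p k = 0 → 4 ∣ k

lemma isEvenZeroedUpTo_succ_iff (p : Fin l → Bool) (n : ℕ) :
    IsEvenZeroedUpTo (n + 1) p ↔ IsEvenZeroedUpTo n p ∧ (psum p (n + 1) = 0 → 4 ∣ n + 1) := by
  refine ⟨fun h => ⟨fun k hk => h k (by omega), h (n + 1) le_rfl⟩, ?_⟩
  rintro ⟨h, hlast⟩ k hk
  rcases Nat.of_le_succ hk with hk | rfl
  · exact h k hk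
  · exact hlast

lemma isEvenZeroedUpTo_succ_iff_of_odd (p : Fin l → Bool) {n : ℕ} (hn : n + 1 ≤ l)
    (hodd : Odd (n + 1)) : IsEvenZeroedUpTo (n + 1) p ↔ IsEvenZeroedUpTo n p := by
  simp [isEvenZeroedUpTo_succ_iff, psum_ne_zero_of_odd p hn hodd]

lemma isEvenZeroedUpTo_take (p : Fin l → Bool) {a n : ℕ} (h : a ≤ l) (hn : n ≤ a) :
    IsEvenZeroedUpTo n (Fin.take a h p) ↔ IsEvenZeroedUpTo n p :=
  forall₂_congr fun k hk => by rw [psum_take p h (hk.trans hn)]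

lemma isEvenZeroed_iff_of_odd {n : ℕ} (p : Fin (n + 1) → Bool) (hodd : Odd (n + 1)) :
    IsEvenZeroed p ↔ IsEvenZeroedUpTo n p :=
  isEvenZeroedUpTo_succ_iff_of_odd p le_rfl hodd

lemma isEvenZeroed_not_iff (p : Fin l → Bool) :
    IsEvenZeroed (fun i => !p i) ↔ IsEvenZeroed p :=
  forall₂_congr fun k _ => by rw [psum_not, neg_eq_zero]

lemma isEvenZeroed_iff_of_four_mul_add_four (m : ℕ) (p : Fin (4 * m + 4) → Bool) :
    IsEvenZeroed p ↔ IsEvenZeroedUpTo (4 * m) p ∧ psum p (4 * m + 2) ≠ 0 := by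
  change IsEvenZeroedUpTo (4 * m + 3 + 1) p ↔ _
  rw [isEvenZeroedUpTo_succ_iff,
    isEvenZeroedUpTo_succ_iff_of_odd p (n := 4 * m + 2) (by omega) ⟨2 * m + 1, by ring⟩,
    isEvenZeroedUpTo_succ_iff,
    isEvenZeroedUpTo_succ_iff_of_odd p (n := 4 * m) (by omega) ⟨2 * m, by ring⟩]
  have h2 : ¬ 4 ∣ 4 * m + 1 + 1 := by omega
  have h4 : 4 ∣ 4 * m + 3 + 1 := by omega
  simp only [h2, h4, imp_false, implies_true, and_true]

lemma card_subtype_take {α : Type*} (a b : ℕ) (P : (Fin a → α) → Prop) :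
    Nat.card {p : Fin (a + b) → α // P (Fin.take a (Nat.le_add_right a b) p)} =
      Nat.card {q // P q} * Nat.card α ^ b := by
  calc _ = Nat.card ({q // P q} × (Fin b → α)) :=
        Nat.card_congr (((Fin.appendEquiv a b).symm.subtypeEquiv (q := fun x => P x.1)
          fun _ => Iff.rfl).trans Equiv.prodSubtypeFstEquivSubtypeProd)
    _ = _ := by rw [Nat.card_prod, Nat.card_fun, Nat.card_fin]

lemma psum_succ_eq_psum_init (s : Fin (l + 1) → Bool) :
    psum s (l + 1) = psum (Fin.init s) l + if s (Fin.last l) then 1 else -1 := by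
  rw [psum_succ s (Nat.lt_succ_self l), ← psum_take s (Nat.le_succ l) le_rfl]
  rfl

/-- A path at height `0` after its last step is at height `±1` one step earlier, and that
height forces the last step. -/
def lastStepReturnEquiv (P : (Fin l → Bool) → Prop) :
    {s : Fin (l + 1) → Bool // P (Fin.init s) ∧ psum s (l + 1) = 0} ≃
      {r : Fin l → Bool // P r ∧ (psum r l = 1 ∨ psum r l = -1)} where
  toFun s := ⟨Fin.init s.1, s.2.1, by
    have h := s.2.2
    rw [psum_succ_eq_psum_init] at h
    split at h <;> omega⟩
  invFun r := ⟨Fin.snoc r.1 (decide (psum r.1 l = -1)), by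
    refine ⟨by simpa only [Fin.init_snoc] using r.2.1, ?_⟩
    rw [psum_succ_eq_psum_init, Fin.init_snoc, Fin.snoc_last]
    rcases r.2.2 with h | h <;> simp [h]⟩
  left_inv s := by
    refine Subtype.ext ?_
    dsimp only
    conv_rhs => rw [← Fin.snoc_init_self s.1]
    congr 1
    have h := s.2.2
    rw [psum_succ_eq_psum_init] at h
    cases hs : s.1 (Fin.last l) <;>
      simp only [hs, Bool.false_eq_true, if_true, if_false, decide_eq_true_eq,
        decide_eq_false_iff_not] at h ⊢ <;> omega
  right_inv r := Subtype.ext (by dsimp only; exact Fin.init_snoc _ _)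

lemma card_psum_last_eq_zero (P : (Fin l → Bool) → Prop) :
    Nat.card {s : Fin (l + 1) → Bool // P (Fin.init s) ∧ psum s (l + 1) = 0} =
      Nat.card {r : Fin l → Bool // P r ∧ psum r l = 1} +
        Nat.card {r : Fin l → Bool // P r ∧ psum r l = -1} := by
  classical
  rw [Nat.card_congr (lastStepReturnEquiv P), ← Nat.card_sum]
  refine Nat.card_congr ((Equiv.subtypeEquivRight fun r => and_or_left).trans
    (subtypeOrEquiv _ _ ?_))
  rintro _ hone hneg r hr
  have := (hone r hr).2
  have := (hneg r hr).2
  omega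

lemma card_isEvenZeroed_psum_neg (a : ℤ) :
    Nat.card {r : Fin l → Bool // IsEvenZeroed r ∧ psum r l = -a} =
      Nat.card {r : Fin l → Bool // IsEvenZeroed r ∧ psum r l = a} := by
  refine Nat.card_congr ((Function.Involutive.toPerm (fun (p : Fin l → Bool) i => !p i)
    (by intro p; funext i; exact Bool.not_not _)).subtypeEquiv fun r => ?_)
  change _ ↔ IsEvenZeroed (fun i => !r i) ∧ psum (fun i => !r i) l = a
  rw [isEvenZeroed_not_iff, psum_not]
  constructor <;> rintro ⟨h1, h2⟩ <;> exact ⟨h1, by omega⟩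

lemma card_isEvenZeroedUpTo (m : ℕ) :
    Nat.card {p : Fin (4 * m + 4) → Bool // IsEvenZeroedUpTo (4 * m) p} =
      16 * Nat.card {q : Fin (4 * m) → Bool // IsEvenZeroed q} := by
  calc _ = Nat.card {p : Fin (4 * m + 4) → Bool //
          IsEvenZeroed (Fin.take (4 * m) (Nat.le_add_right _ _) p)} :=
        Nat.card_congr <| Equiv.subtypeEquivRight fun p =>
          (isEvenZeroedUpTo_take p _ le_rfl).symm
    _ = _ := by
      rw [card_subtype_take, Nat.card_eq_fintype_card (α := Bool), Fintype.card_bool]; ring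

lemma card_isEvenZeroedUpTo_eq_add (m : ℕ) :
    Nat.card {p : Fin (4 * m + 4) → Bool // IsEvenZeroedUpTo (4 * m) p} =
      Nat.card {p : Fin (4 * m + 4) → Bool //
          IsEvenZeroedUpTo (4 * m) p ∧ psum p (4 * m + 2) = 0} +
        Nat.card {p : Fin (4 * m + 4) → Bool // IsEvenZeroed p} := by
  classical
  rw [← Nat.card_sum]
  refine Nat.card_congr ((Equiv.subtypeEquivRight fun p => ?_).trans
    (subtypeOrEquiv _ _ ?_))
  · rw [isEvenZeroed_iff_of_four_mul_add_four]
    tauto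
  · rintro _ hret hez p hp
    exact ((isEvenZeroed_iff_of_four_mul_add_four m p).1 (hez p hp)).2 (hret p hp).2

lemma card_isEvenZeroedUpTo_psum_eq_zero (m : ℕ) :
    Nat.card {p : Fin (4 * m + 4) → Bool //
        IsEvenZeroedUpTo (4 * m) p ∧ psum p (4 * m + 2) = 0} =
      8 * Nat.card {r : Fin (4 * m + 1) → Bool // IsEvenZeroed r ∧ psum r (4 * m + 1) = 1} := by
  calc _ = Nat.card {p : Fin (4 * m + 2 + 2) → Bool //
          IsEvenZeroedUpTo (4 * m) (Fin.take (4 * m + 2) (Nat.le_add_right _ _) p) ∧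
            psum (Fin.take (4 * m + 2) (Nat.le_add_right _ _) p) (4 * m + 2) = 0} :=
        Nat.card_congr <| Equiv.subtypeEquivRight fun p => by
          rw [isEvenZeroedUpTo_take p _ (by omega), psum_take p _ le_rfl]
    _ = Nat.card {s : Fin (4 * m + 2) → Bool //
          IsEvenZeroedUpTo (4 * m) s ∧ psum s (4 * m + 2) = 0} * Nat.card Bool ^ 2 :=
        card_subtype_take _ _ fun s => IsEvenZeroedUpTo (4 * m) s ∧ psum s (4 * m + 2) = 0
    _ = Nat.card {s : Fin (4 * m + 1 + 1) → Bool //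
          IsEvenZeroed (Fin.init s) ∧ psum s (4 * m + 1 + 1) = 0} * Nat.card Bool ^ 2 := by
        congr 1
        refine Nat.card_congr <| Equiv.subtypeEquivRight fun s => ?_
        rw [isEvenZeroed_iff_of_odd (Fin.init s) ⟨2 * m, by ring⟩]
        exact and_congr (isEvenZeroedUpTo_take s (Nat.le_succ _) (by omega)).symm Iff.rfl
    _ = _ := by
      rw [card_psum_last_eq_zero, card_isEvenZeroed_psum_neg,
        Nat.card_eq_fintype_card (α := Bool), Fintype.card_bool]
      ring

/-- For every positive integer `n`, the number of even-zeroed paths of length `4n` equals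
`16` times the number of even-zeroed paths of length `4(n−1)` minus `8` times the number
of even-zeroed paths of length `4(n−1) + 1` with total sum of steps equal to `1`. -/
theorem card_evenZeroed_recursion (n : ℕ) (hn : 0 < n) :
    (Nat.card {p : Fin (4 * n) → Bool // IsEvenZeroed p} : ℤ) =
      16 * Nat.card {p : Fin (4 * (n - 1)) → Bool // IsEvenZeroed p} -
        8 * Nat.card {p : Fin (4 * (n - 1) + 1) → Bool //
          IsEvenZeroed p ∧ psum p (4 * (n - 1) + 1) = 1} := by
  obtain ⟨m, rfl⟩ : ∃ m, n = m + 1 := ⟨n - 1, by omega⟩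
  have hsplit := card_isEvenZeroedUpTo_eq_add m
  rw [card_isEvenZeroedUpTo, card_isEvenZeroedUpTo_psum_eq_zero] at hsplit
  change (Nat.card {p : Fin (4 * m + 4) → Bool // IsEvenZeroed p} : ℤ) = _
  rw [Nat.add_sub_cancel]
  omega
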